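/- Let R be an algebraic curvature tensor on ℝⁿ (n ≥ 5) with nonnegative isotropic curvature, attaining the value 0 at an orthonormal four-frame {e₁,e₂,e₃,e₄}. Then for each q ∈ {5,…,n}, the first-variation identity R₁₃₃q + R₁₄₄q + R₄₃₂q = 0 holds (obtained by rotating e₁ towards e_q). -/

import Mathlib

noncomputable section
open scoped BigOperators

def dotp {n : ℕ} (X Y : Fin n → ℝ) : ℝ := ∑ i, X i * Y i

def ON4 {n : ℕ} (e₁ e₂ e₃ e₄ : Fin n → ℝ) : Prop :=
  dotp e₁ e₁ = 1 ∧ dotp e₂ e₂ = 1 ∧ dotp e₃ e₃ = 1 ∧ dotp e₄ e₄ = 1 ∧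
  dotp e₁ e₂ = 0 ∧ dotp e₁ e₃ = 0 ∧ dotp e₁ e₄ = 0 ∧
  dotp e₂ e₃ = 0 ∧ dotp e₂ e₄ = 0 ∧ dotp e₃ e₄ = 0

def isoCurv {n : ℕ} (R : MultilinearMap ℝ (fun _ : Fin 4 => (Fin n → ℝ)) ℝ)
    (e₁ e₂ e₃ e₄ : Fin n → ℝ) : ℝ :=
  R ![e₁, e₃, e₁, e₃] + R ![e₁, e₄, e₁, e₄] + R ![e₂, e₃, e₂, e₃]
    + R ![e₂, e₄, e₂, e₄] - 2 * R ![e₁, e₂, e₃, e₄]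

/-!
Rotating `e₁` towards `v` in the plane they span keeps the frame orthonormal, and by
multilinearity the isotropic curvature of the rotated frame is a quadratic trigonometric
polynomial in the angle. It is nonnegative and vanishes at angle `0`, so its derivative there,
`-2 (R₁₃₃ᵥ + R₁₄₄ᵥ + R₄₃₂ᵥ)` after using the curvature symmetries, is zero.
-/

open Real

lemma dotp_comm {n : ℕ} (X Y : Fin n → ℝ) : dotp X Y = dotp Y X := by
  simp only [dotp, mul_comm]

lemma dotp_add_smul_left {n : ℕ} (a b : ℝ) (x y z : Fin n → ℝ) :
    dotp (a • x + b • y) z = a * dotp x z + b * dotp y z := by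
  simp only [dotp, Pi.add_apply, Pi.smul_apply, smul_eq_mul, add_mul, mul_assoc,
    Finset.sum_add_distrib, Finset.mul_sum]

lemma dotp_add_smul_right {n : ℕ} (a b : ℝ) (x y z : Fin n → ℝ) :
    dotp z (a • x + b • y) = a * dotp z x + b * dotp z y := by
  rw [dotp_comm, dotp_add_smul_left, dotp_comm x, dotp_comm y]

lemma ON4.rotate_first {n : ℕ} {e₁ e₂ e₃ e₄ v : Fin n → ℝ} (he : ON4 e₁ e₂ e₃ e₄)
    (hvv : dotp v v = 1) (h1v : dotp e₁ v = 0) (h2v : dotp e₂ v = 0)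
    (h3v : dotp e₃ v = 0) (h4v : dotp e₄ v = 0) (θ : ℝ) :
    ON4 (cos θ • e₁ + sin θ • v) e₂ e₃ e₄ := by
  obtain ⟨h11, h22, h33, h44, h12, h13, h14, h23, h24, h34⟩ := he
  refine ⟨?_, h22, h33, h44, ?_, ?_, ?_, h23, h24, h34⟩
  · rw [dotp_add_smul_left, dotp_add_smul_right, dotp_add_smul_right, h11, hvv, h1v,
      dotp_comm v e₁, h1v]
    linear_combination sin_sq_add_cos_sq θ
  all_goals
    rw [dotp_add_smul_left]
    simp only [h12, h13, h14, dotp_comm v, h2v, h3v, h4v]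
    ring

namespace MultilinearMap

variable {S M N : Type*} [CommSemiring S] [AddCommMonoid M] [AddCommMonoid N]
  [Module S M] [Module S N] (f : MultilinearMap S (fun _ : Fin 4 => M) N)

lemma map_vec4_add_smul_zero (a b : S) (x y p q r : M) :
    f ![a • x + b • y, p, q, r] = a • f ![x, p, q, r] + b • f ![y, p, q, r] := by
  have slot : ∀ z, f ![z, p, q, r] = f.toLinearMap ![0, p, q, r] 0 z := fun z => by
    rw [toLinearMap_apply]; congr 1; funext i; fin_cases i <;> rfl
  simp only [slot, map_add, map_smul]

lemma map_vec4_add_smul_two (a b : S) (x y p q r : M) :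
    f ![p, q, a • x + b • y, r] = a • f ![p, q, x, r] + b • f ![p, q, y, r] := by
  have slot : ∀ z, f ![p, q, z, r] = f.toLinearMap ![p, q, 0, r] 2 z := fun z => by
    rw [toLinearMap_apply]; congr 1; funext i; fin_cases i <;> rfl
  simp only [slot, map_add, map_smul]

end MultilinearMap

lemma isoCurv_add_smul_first {n : ℕ} (R : MultilinearMap ℝ (fun _ : Fin 4 => (Fin n → ℝ)) ℝ)
    (c s : ℝ) (e₁ e₂ e₃ e₄ v : Fin n → ℝ) :
    isoCurv R (c • e₁ + s • v) e₂ e₃ e₄ =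
      (R ![e₁, e₃, e₁, e₃] + R ![e₁, e₄, e₁, e₄]) * c ^ 2
      + (R ![e₁, e₃, v, e₃] + R ![v, e₃, e₁, e₃] + R ![e₁, e₄, v, e₄] + R ![v, e₄, e₁, e₄])
          * (c * s)
      + (R ![v, e₃, v, e₃] + R ![v, e₄, v, e₄]) * s ^ 2
      + (-2 * R ![e₁, e₂, e₃, e₄]) * c + (-2 * R ![v, e₂, e₃, e₄]) * s
      + (R ![e₂, e₃, e₂, e₃] + R ![e₂, e₄, e₂, e₄]) := by
  simp only [isoCurv, R.map_vec4_add_smul_zero, R.map_vec4_add_smul_two, smul_eq_mul]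
  ring

lemma hasDerivAt_trig_quadratic_zero (a b c d e k : ℝ) :
    HasDerivAt (fun θ => a * cos θ ^ 2 + b * (cos θ * sin θ) + c * sin θ ^ 2
      + d * cos θ + e * sin θ + k) (b + e) 0 := by
  have h := (((((((hasDerivAt_cos 0).pow 2).const_mul a).add
    (((hasDerivAt_cos 0).mul (hasDerivAt_sin 0)).const_mul b)).add
    (((hasDerivAt_sin 0).pow 2).const_mul c)).add
    ((hasDerivAt_cos 0).const_mul d)).add
    ((hasDerivAt_sin 0).const_mul e)).add_const k
  simpa using h

lemma antisymm_right_of_antisymm_of_pair {M N : Type*} [AddCommGroup N] {R : (Fin 4 → M) → N}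
    (hanti : ∀ X Y Z W, R ![X, Y, Z, W] = - R ![Y, X, Z, W])
    (hpair : ∀ X Y Z W, R ![X, Y, Z, W] = R ![Z, W, X, Y]) (X Y Z W : M) :
    R ![X, Y, Z, W] = - R ![X, Y, W, Z] := by
  rw [hpair X Y Z W, hanti Z W X Y, hpair W Z X Y]

theorem first_variation_rotation_1q_general {n : ℕ}
    (R : MultilinearMap ℝ (fun _ : Fin 4 => (Fin n → ℝ)) ℝ)
    (hanti : ∀ X Y Z W, R ![X, Y, Z, W] = - R ![Y, X, Z, W])
    (hpair : ∀ X Y Z W, R ![X, Y, Z, W] = R ![Z, W, X, Y])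
    (hnic : ∀ e₁ e₂ e₃ e₄ : Fin n → ℝ, ON4 e₁ e₂ e₃ e₄ →
      0 ≤ isoCurv R e₁ e₂ e₃ e₄)
    (e₁ e₂ e₃ e₄ : Fin n → ℝ) (he : ON4 e₁ e₂ e₃ e₄)
    (hzero : isoCurv R e₁ e₂ e₃ e₄ = 0) :
    ∀ v : Fin n → ℝ, dotp v v = 1 → dotp e₁ v = 0 → dotp e₂ v = 0 →
      dotp e₃ v = 0 → dotp e₄ v = 0 →
      R ![e₁, e₃, e₃, v] + R ![e₁, e₄, e₄, v] + R ![e₄, e₃, e₂, v] = 0 := by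
  intro v hvv h1v h2v h3v h4v
  have hmin : IsLocalMin (fun θ => isoCurv R (cos θ • e₁ + sin θ • v) e₂ e₃ e₄) 0 :=
    Filter.Eventually.of_forall fun θ => by
      simpa [hzero] using hnic _ _ _ _ (he.rotate_first hvv h1v h2v h3v h4v θ)
  simp only [isoCurv_add_smul_first] at hmin
  have hcrit := hmin.hasDerivAt_eq_zero (hasDerivAt_trig_quadratic_zero _ _ _ _ _ _)
  have hanti₂ := antisymm_right_of_antisymm_of_pair hanti hpair
  have hv234 : R ![v, e₂, e₃, e₄] = R ![e₄, e₃, e₂, v] := by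
    rw [hpair, hanti, hanti₂, neg_neg]
  rw [hpair v e₃, hpair v e₄, hanti₂ e₁ e₃ v, hanti₂ e₁ e₄ v, hv234] at hcrit
  linarith

theorem first_variation_rotation_1q {n : ℕ} (hn : 5 ≤ n)
    (R : MultilinearMap ℝ (fun _ : Fin 4 => (Fin n → ℝ)) ℝ)
    (hanti : ∀ X Y Z W, R ![X, Y, Z, W] = - R ![Y, X, Z, W])
    (hpair : ∀ X Y Z W, R ![X, Y, Z, W] = R ![Z, W, X, Y])
    (hbianchi : ∀ X Y Z W,
      R ![X, Y, Z, W] + R ![Y, Z, X, W] + R ![Z, X, Y, W] = 0)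
    (hnic : ∀ e₁ e₂ e₃ e₄ : Fin n → ℝ, ON4 e₁ e₂ e₃ e₄ →
      0 ≤ isoCurv R e₁ e₂ e₃ e₄)
    (e₁ e₂ e₃ e₄ : Fin n → ℝ) (he : ON4 e₁ e₂ e₃ e₄)
    (hzero : isoCurv R e₁ e₂ e₃ e₄ = 0) :
    ∀ v : Fin n → ℝ, dotp v v = 1 → dotp e₁ v = 0 → dotp e₂ v = 0 →
      dotp e₃ v = 0 → dotp e₄ v = 0 →
      R ![e₁, e₃, e₃, v] + R ![e₁, e₄, e₄, v] + R ![e₄, e₃, e₂, v] = 0 :=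
  first_variation_rotation_1q_general R hanti hpair hnic e₁ e₂ e₃ e₄ he hzero
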